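/- For all x and n ≥ 0, the identity ∑_{k=0}^{n+1} binom(x+k, n+1) A_λ(n+1,k) = (x + nλ) · ∑_{k=0}^{n} binom(x+k, n) A_λ(n,k) holds, where binom denotes the generalized binomial coefficient in x. -/

import Mathlib

/-!
Weighting the recurrence `A_λ(n+1,k+1) = (n-k+nλ) A_λ(n,k) + (k+2-nλ) A_λ(n,k+1)` by `b k` and
summing over `k` (the boundary terms vanish since `A_λ(n,n+1) = 0`) moves it onto the weights:
`∑ b k A_λ(n+1,k) = ∑ (b (k+1) (n-k+nλ) + b k (k+1-nλ)) A_λ(n,k)`. For `b k = binom(x+k, n+1)`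
the new weight is `(x+nλ) binom(x+k, n)`, by the identity
`binom(y+1,m+1) (m-a) + binom(y,m+1) (a+1) = (y-a) binom(y,m)`, which is linear in `a`.
-/

open Finset PowerSeries

/-- Degenerate falling factorial `(x)_{n,λ} = x(x-λ)⋯(x-(n-1)λ)`. -/
noncomputable def dfall (l x : ℝ) (n : ℕ) : ℝ := ∏ i ∈ Finset.range n, (x - i * l)

/-- Degenerate Eulerian number `A_λ(n,k) = ∑_{i=0}^k C(n+1,i)(-1)^i (k-i+1)_{n,λ}`. -/
noncomputable def degEulerianNum (l : ℝ) (n k : ℕ) : ℝ :=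
  ∑ i ∈ Finset.range (k+1), ((n+1).choose i : ℝ) * (-1)^i * dfall l ((k : ℝ) - i + 1) n

/-- Degenerate Eulerian polynomial `A_{n,λ}(x) = ∑_{k=0}^n A_λ(n,k) x^k`. -/
noncomputable def degEulerianPoly (l : ℝ) (n : ℕ) (x : ℝ) : ℝ :=
  ∑ k ∈ Finset.range (n+1), degEulerianNum l n k * x^k

/-- Generalized binomial coefficient `binom(y,m) = y(y-1)⋯(y-m+1)/m!`. -/
noncomputable def genBinom (y : ℝ) (m : ℕ) : ℝ :=
  (∏ i ∈ Finset.range m, (y - i)) / m.factorial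

/-- Degenerate exponential `e_λ^x(t) = ∑_k (x)_{k,λ} t^k/k!` as a formal power series. -/
noncomputable def degExp (l x : ℝ) : PowerSeries ℝ :=
  PowerSeries.mk fun k => dfall l x k / k.factorial

/-- Degenerate Stirling number of the second kind (explicit formula). -/
noncomputable def degStirling2 (l : ℝ) (n k : ℕ) : ℝ :=
  (-1)^k / k.factorial * ∑ j ∈ Finset.range (k+1), (-1)^j * (k.choose j : ℝ) * dfall l j n

theorem dfall_succ (l x : ℝ) (n : ℕ) : dfall l x (n + 1) = dfall l x n * (x - n * l) :=
  prod_range_succ _ _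

section AlternatingBinomialSums

variable {R : Type*} [CommRing R]

theorem Nat.cast_choose_succ_mul (m i : ℕ) :
    (m.choose (i + 1) : R) * (i + 1) = m.choose i * (m - i) := by
  rcases le_or_gt i m with h | h
  · have hnat := congrArg (Nat.cast (R := R)) (Nat.choose_succ_right_eq m i)
    push_cast [h] at hnat
    exact hnat
  · simp [Nat.choose_eq_zero_of_lt h, Nat.choose_eq_zero_of_lt (h.trans (Nat.lt_succ_self i))]

theorem sum_range_succ_choose_mul_neg_one_pow (m k : ℕ) (F : ℕ → R) :
    ∑ i ∈ range (k + 2), ((m + 1).choose i : R) * (-1) ^ i * F i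
      = ∑ i ∈ range (k + 2), (m.choose i : R) * (-1) ^ i * F i
        - ∑ i ∈ range (k + 1), (m.choose i : R) * (-1) ^ i * F (i + 1) := by
  rw [sum_range_succ', sum_range_succ' (fun i => (m.choose i : R) * (-1) ^ i * F i),
    add_sub_right_comm, ← sum_sub_distrib]
  congr 1
  · refine sum_congr rfl fun i _ => ?_
    rw [Nat.choose_succ_succ, Nat.cast_add]
    ring
  · simp

theorem sum_range_choose_mul_neg_one_pow_mul_cast (m k : ℕ) (F : ℕ → R) :
    ∑ i ∈ range (k + 2), (m.choose i : R) * (-1) ^ i * i * F i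
      = -∑ i ∈ range (k + 1), (m.choose i : R) * (-1) ^ i * (m - i) * F (i + 1) := by
  rw [sum_range_succ', ← sum_neg_distrib]
  simp only [Nat.cast_zero, mul_zero, zero_mul, add_zero]
  refine sum_congr rfl fun i _ => ?_
  rw [Nat.cast_succ]
  linear_combination (-1) ^ (i + 1) * F (i + 1) * Nat.cast_choose_succ_mul (R := R) m i

theorem sum_range_choose_mul_neg_one_pow_recurrence (n k : ℕ) (c : R) (D : ℕ → R) :
    ∑ i ∈ range (k + 2), ((n + 2).choose i : R) * (-1) ^ i * (D i * (k + 2 - i - c))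
      = (n - k + c) * ∑ i ∈ range (k + 1), ((n + 1).choose i : R) * (-1) ^ i * D (i + 1)
        + (k + 2 - c) * ∑ i ∈ range (k + 2), ((n + 1).choose i : R) * (-1) ^ i * D i := by
  have hsplit : ∑ i ∈ range (k + 2), ((n + 1).choose i : R) * (-1) ^ i * (D i * (k + 2 - i - c))
      = (k + 2 - c) * ∑ i ∈ range (k + 2), ((n + 1).choose i : R) * (-1) ^ i * D i
        - ∑ i ∈ range (k + 2), ((n + 1).choose i : R) * (-1) ^ i * i * D i := by
    rw [mul_sum, ← sum_sub_distrib]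
    exact sum_congr rfl fun i _ => by ring
  have hsplit' : ∑ i ∈ range (k + 1),
        ((n + 1).choose i : R) * (-1) ^ i * (D (i + 1) * (k + 2 - (i + 1 : ℕ) - c))
      = ∑ i ∈ range (k + 1), ((n + 1).choose i : R) * (-1) ^ i * ((n + 1 : ℕ) - i) * D (i + 1)
        - (n - k + c) * ∑ i ∈ range (k + 1), ((n + 1).choose i : R) * (-1) ^ i * D (i + 1) := by
    rw [mul_sum, ← sum_sub_distrib]
    exact sum_congr rfl fun i _ => by push_cast; ring
  rw [sum_range_succ_choose_mul_neg_one_pow (n + 1) k, hsplit, hsplit',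
    sum_range_choose_mul_neg_one_pow_mul_cast]
  ring

end AlternatingBinomialSums

section DegenerateEulerian

variable (l : ℝ)

theorem degEulerianNum_succ_zero (n : ℕ) :
    degEulerianNum l (n + 1) 0 = (1 - n * l) * degEulerianNum l n 0 := by
  simp [degEulerianNum, dfall_succ, mul_comm]

theorem degEulerianNum_succ_succ (n k : ℕ) :
    degEulerianNum l (n + 1) (k + 1)
      = (n - k + n * l) * degEulerianNum l n k + (k + 2 - n * l) * degEulerianNum l n (k + 1) := by
  have hshift : ∀ i : ℕ, ((k + 1 : ℕ) : ℝ) - i + 1 = k + 2 - i := fun i => by push_cast; ring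
  have hshift' : ∀ i : ℕ, (k : ℝ) - i + 1 = k + 2 - (i + 1 : ℕ) := fun i => by push_cast; ring
  simp only [degEulerianNum, hshift, hshift', dfall_succ]
  exact sum_range_choose_mul_neg_one_pow_recurrence n k (n * l) fun i => dfall l (k + 2 - i) n

theorem degEulerianNum_eq_zero_of_lt {n k : ℕ} (h : n < k) : degEulerianNum l n k = 0 := by
  induction n generalizing k with
  | zero =>
    obtain ⟨m, rfl⟩ := Nat.exists_eq_add_of_lt h
    have halt := Int.alternating_sum_range_choose_eq_choose (n := 0) (m := m + 1)
    simp only [Nat.choose_eq_zero_of_lt (Nat.succ_pos m), Nat.cast_zero, mul_zero] at halt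
    simpa [degEulerianNum, dfall, mul_comm] using congrArg (Int.cast (R := ℝ)) halt
  | succ n ih =>
    obtain ⟨m, rfl⟩ := Nat.exists_eq_add_of_lt h
    rw [degEulerianNum_succ_succ, ih (by omega), ih (by omega)]
    ring

theorem sum_mul_degEulerianNum_succ (n : ℕ) (b : ℕ → ℝ) :
    ∑ k ∈ range (n + 2), b k * degEulerianNum l (n + 1) k
      = ∑ k ∈ range (n + 1),
          (b (k + 1) * (n - k + n * l) + b k * (k + 1 - n * l)) * degEulerianNum l n k := by
  set g : ℕ → ℝ := fun k => b k * (k + 1 - n * l) * degEulerianNum l n k with hg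
  have htelescope : ∑ k ∈ range (n + 1), g k = ∑ k ∈ range (n + 1), g (k + 1) + g 0 := by
    have hlast : g (n + 1) = 0 := by
      simp only [hg, degEulerianNum_eq_zero_of_lt l (Nat.lt_succ_self n), mul_zero]
    rw [← sum_range_succ', sum_range_succ g (n + 1), hlast, add_zero]
  simp only [add_mul, sum_add_distrib]
  rw [htelescope, sum_range_succ', degEulerianNum_succ_zero, ← add_assoc, ← sum_add_distrib]
  congr 1
  · refine sum_congr rfl fun k _ => ?_
    rw [degEulerianNum_succ_succ, hg]
    push_cast
    ring
  · simp only [hg, Nat.cast_zero]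
    ring

end DegenerateEulerian

theorem genBinom_succ_mul (y : ℝ) (m : ℕ) :
    genBinom y (m + 1) * (m + 1) = (y - m) * genBinom y m := by
  rw [genBinom, genBinom, prod_range_succ, Nat.factorial_succ]
  push_cast
  field_simp

theorem genBinom_add_one_succ_mul (y : ℝ) (m : ℕ) :
    genBinom (y + 1) (m + 1) * (m + 1) = (y + 1) * genBinom y m := by
  rw [genBinom, genBinom, prod_range_succ', Nat.factorial_succ]
  push_cast
  simp only [add_sub_add_right_eq_sub, sub_zero]
  field_simp

theorem genBinom_add_one_succ_mul_add (y a : ℝ) (m : ℕ) :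
    genBinom (y + 1) (m + 1) * (m - a) + genBinom y (m + 1) * (a + 1) = (y - a) * genBinom y m := by
  apply mul_right_cancel₀ (Nat.cast_add_one_ne_zero m : (m : ℝ) + 1 ≠ 0)
  linear_combination (m - a) * genBinom_add_one_succ_mul y m + (a + 1) * genBinom_succ_mul y m

/-- `∑_{k=0}^{n+1} binom(x+k, n+1) A_λ(n+1,k)
 = (x + nλ) ∑_{k=0}^n binom(x+k, n) A_λ(n,k)`. -/
theorem stmt9 (l : ℝ) (n : ℕ) (x : ℝ) :
    ∑ k ∈ Finset.range (n + 2), genBinom (x + k) (n + 1) * degEulerianNum l (n + 1) k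
      = (x + n * l) * ∑ k ∈ Finset.range (n + 1), genBinom (x + k) n * degEulerianNum l n k := by
  rw [sum_mul_degEulerianNum_succ l n fun k => genBinom (x + k) (n + 1), mul_sum]
  refine sum_congr rfl fun k _ => ?_
  rw [Nat.cast_succ, ← add_assoc]
  linear_combination degEulerianNum l n k * genBinom_add_one_succ_mul_add (x + k) (k - n * l) n
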